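/- arXiv:2508.14634 — 2 statements merged into one kernel-verified Lean document; each statement's English description precedes it below -/
import Mathlib

section
/- Let V be a finite-dimensional complex vector space, let I be a symmetric 2n-multilinear form on V (playing the role of the intersection form on a hyperkähler 2n-fold), and let q be a symmetric bilinear form on V such that I(α₁,…,α_{2n}) = c Σ_{ρ∈S_{2n}} q(α_{ρ(1)},α_{ρ(2)}) ⋯ q(α_{ρ(2n-1)},α_{ρ(2n)}) for some c > 0. Let σ, σ̄, β, ω₁,…,ω_{p-2} ∈ V with 2 ≤ p ≤ n. Suppose q(β,β) = 0, q(σ,σ) = 0, q(σ̄,σ̄) = 0, q(β,σ) = 0, q(β,σ̄) = 0. Then I(β,…,β,σ,…,σ,σ̄,…,σ̄,ω₁,…,ω_{p-2}) = 0, where β appears p times, σ appears n−p+1 times, and σ̄ appears n−p+1 times. -/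
/-- The "partner" involution `2i ↔ 2i+1` on `Fin (2N)`. -/
def stmt8s (N : ℕ) (k : Fin (2 * N)) : Fin (2 * N) :=
  ⟨2 * (k.1 / 2) + 1 - k.1 % 2, by have := k.isLt; omega⟩

theorem stmt8s_val (N : ℕ) (k : Fin (2 * N)) :
    (stmt8s N k).1 = 2 * (k.1 / 2) + 1 - k.1 % 2 := rfl

theorem stmt8s_inj (N : ℕ) : Function.Injective (stmt8s N) := by
  intro a b h
  have h' := congrArg Fin.val h
  rw [stmt8s_val, stmt8s_val] at h'
  exact Fin.ext (by omega)

/-- polarization-algebra content of the wedge-vanishing corollary.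
Let `V` be a complex vector space, `I` a symmetric `2n`-multilinear form satisfying the
Fujiki polarization identity with respect to a symmetric bilinear form `q` and a
constant `c > 0`.  Let `σ, σ̄, β, ω₁,…,ω_{p-2} ∈ V` with `2 ≤ p ≤ n` and
`q(β,β) = q(σ,σ) = q(σ̄,σ̄) = q(β,σ) = q(β,σ̄) = 0`.  Then
`I(β,…,β,σ,…,σ,σ̄,…,σ̄,ω₁,…,ω_{p-2}) = 0`, with `β` appearing `p` times and `σ`, `σ̄`
each appearing `n−p+1` times. -/
theorem stmt_8 {V : Type*} [AddCommGroup V] [Module ℂ V] (n p : ℕ)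
    (hp2 : 2 ≤ p) (hpn : p ≤ n)
    (I : MultilinearMap ℂ (fun _ : Fin (2 * n) => V) ℂ)
    (q : V →ₗ[ℂ] V →ₗ[ℂ] ℂ) (hqsym : ∀ x y : V, q x y = q y x)
    (c : ℝ) (hc : 0 < c)
    (hpolar : ∀ αs : Fin (2 * n) → V,
      I αs = (c : ℂ) * ∑ ρ : Equiv.Perm (Fin (2 * n)),
        ∏ i : Fin n,
          q (αs (ρ ⟨2 * i.1, by have := i.isLt; omega⟩))
            (αs (ρ ⟨2 * i.1 + 1, by have := i.isLt; omega⟩)))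
    (σ σbar β : V) (ω : Fin (p - 2) → V)
    (hββ : q β β = 0) (hσσ : q σ σ = 0) (hσbσb : q σbar σbar = 0)
    (hβσ : q β σ = 0) (hβσb : q β σbar = 0) :
    I (fun i : Fin (2 * n) =>
        if i.1 < p then β
        else if i.1 < n + 1 then σ
        else if h : i.1 < 2 * n - p + 2 then σbar
        else ω ⟨i.1 - (2 * n - p + 2), by have := i.isLt; omega⟩) = 0 := by
  set F : Fin (2 * n) → V := fun i : Fin (2 * n) =>
        if i.1 < p then β
        else if i.1 < n + 1 then σ
        else if h : i.1 < 2 * n - p + 2 then σbar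
        else ω ⟨i.1 - (2 * n - p + 2), by have := i.isLt; omega⟩ with hF
  have key : ∀ j j' : Fin (2 * n), j.1 < p → j'.1 < 2 * n - p + 2 →
      q (F j) (F j') = 0 := by
    intro j j' hj hj'
    have hFj : F j = β := by rw [hF]; simp [hj]
    rw [hFj]
    rcases lt_or_ge j'.1 p with h1 | h1
    · have : F j' = β := by rw [hF]; simp [h1]
      rw [this, hββ]
    · rcases lt_or_ge j'.1 (n + 1) with h2 | h2
      · have : F j' = σ := by rw [hF]; simp [Nat.not_lt.mpr h1, h2]
        rw [this, hβσ]
      · have : F j' = σbar := by rw [hF]; simp [Nat.not_lt.mpr h1, Nat.not_lt.mpr h2, hj']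
        rw [this, hβσb]
  rw [hpolar]
  refine mul_eq_zero_of_right _ (Finset.sum_eq_zero fun ρ _ => ?_)
  by_contra hne
  have hfac := Finset.prod_ne_zero_iff.mp hne
  set f : Fin (2 * n) → Fin (2 * n) := fun j => ρ (stmt8s n (ρ.symm j)) with hf
  have hpart : ∀ j : Fin (2 * n), q (F j) (F (f j)) ≠ 0 := by
    have hpart0 : ∀ k : Fin (2 * n), q (F (ρ k)) (F (ρ (stmt8s n k))) ≠ 0 := by
      intro k
      have hkn := k.isLt
      have hilt : k.1 / 2 < n := by omega
      have h1 := hfac ⟨k.1 / 2, hilt⟩ (Finset.mem_univ _)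
      simp only at h1
      rcases Nat.mod_two_eq_zero_or_one k.1 with hpar | hpar
      · have e1 : (⟨2 * (k.1 / 2), by omega⟩ : Fin (2 * n)) = k :=
          Fin.ext (by show 2 * (k.1 / 2) = k.1; omega)
        have e2 : (⟨2 * (k.1 / 2) + 1, by omega⟩ : Fin (2 * n)) = stmt8s n k :=
          Fin.ext (by show 2 * (k.1 / 2) + 1 = 2 * (k.1 / 2) + 1 - k.1 % 2; omega)
        have E1 : F (ρ (⟨2 * (k.1 / 2), by omega⟩ : Fin (2 * n))) = F (ρ k) := by rw [e1]
        have E2 : F (ρ (⟨2 * (k.1 / 2) + 1, by omega⟩ : Fin (2 * n))) = F (ρ (stmt8s n k)) := by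
          rw [e2]
        rw [E1, E2] at h1
        exact h1
      · have e1 : (⟨2 * (k.1 / 2), by omega⟩ : Fin (2 * n)) = stmt8s n k :=
          Fin.ext (by show 2 * (k.1 / 2) = 2 * (k.1 / 2) + 1 - k.1 % 2; omega)
        have e2 : (⟨2 * (k.1 / 2) + 1, by omega⟩ : Fin (2 * n)) = k :=
          Fin.ext (by show 2 * (k.1 / 2) + 1 = k.1; omega)
        have E1 : F (ρ (⟨2 * (k.1 / 2), by omega⟩ : Fin (2 * n))) = F (ρ (stmt8s n k)) := by
          rw [e1]
        have E2 : F (ρ (⟨2 * (k.1 / 2) + 1, by omega⟩ : Fin (2 * n))) = F (ρ k) := by rw [e2]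
        rw [E1, E2] at h1
        rw [hqsym]
        exact h1
    intro j
    have h0 := hpart0 (ρ.symm j)
    rw [Equiv.apply_symm_apply] at h0
    rw [hf]
    exact h0
  have hW : ∀ j : Fin (2 * n), j.1 < p → 2 * n - p + 2 ≤ (f j).1 := by
    intro j hj
    by_contra h
    push_neg at h
    exact hpart j (key j (f j) hj h)
  have hfinj : Function.Injective f := by
    intro a b h
    rw [hf] at h
    exact ρ.symm.injective (stmt8s_inj n (ρ.injective h))
  have hlt2n : ∀ k : Fin p, k.1 < 2 * n := fun k => by have := k.isLt; omega
  set g : Fin p → Fin (p - 2) := fun k =>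
    ⟨(f ⟨k.1, hlt2n k⟩).1 - (2 * n - p + 2), by
      have h1 := (f ⟨k.1, hlt2n k⟩).isLt
      have h2 := hW ⟨k.1, hlt2n k⟩ k.2
      omega⟩ with hg
  have hginj : Function.Injective g := by
    intro a b h
    have h' := congrArg Fin.val h
    simp only [hg] at h'
    have h1 := hW ⟨a.1, hlt2n a⟩ a.2
    have h2 := hW ⟨b.1, hlt2n b⟩ b.2
    have hfe : f ⟨a.1, hlt2n a⟩ = f ⟨b.1, hlt2n b⟩ := Fin.ext (by omega)
    have hv := congrArg Fin.val (hfinj hfe)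
    simp only [Fin.val_mk] at hv
    exact Fin.ext hv
  have := Fintype.card_le_of_injective g hginj
  simp only [Fintype.card_fin] at this
  omega
end

section
/- Let X be a compact Kähler manifold, α ∈ H^{1,1}(X,ℝ) a nef class, and E₁, E₂ ≥ 0 effective ℝ-divisors on X with E₁ − E₂ ∈ α (i.e. {E₁} − {E₂} = α), where E₁ and E₂ have no common components and E₁ satisfies: for every component Γ of E₁ the class {E₁}|_Γ is not pseudoeffective unless E₁ = 0 (the exceptionality condition of Nakayama's negativity lemma). Then E₁ = E₂ = 0. -/
/-- Let `X` be a compact Kähler manifold, `α` a nef `(1,1)`-class and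
`E₁, E₂ ≥ 0` effective `ℝ`-divisors without common components with `{E₁} − {E₂} = α`,
where `E₁` satisfies the exceptionality condition of Nakayama's negativity lemma:
if `E₁ ≠ 0` then some component `Γ` of `E₁` has `{E₁}|_Γ` not pseudoeffective.  Then
`E₁ = E₂ = 0`.  Encoding: `ι` indexes the prime divisors, divisors are finitely
supported functions `ι →₀ ℝ`, `cl` is the cohomology-class map, `res i` restriction to
the component `i` (with pseudoeffective cones `Psef i`), `PsefH` the pseudoeffective
cone of `X`.  The hypotheses record: the restriction of the effective divisor `E₂` to a
component of `E₁` is psef, the restriction of the nef class `α` is psef, psef cones are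
closed under addition, classes of effective divisors are psef, the psef cone is pointed
(contains no lines), and an effective divisor with zero class is zero. -/
theorem stmt_12 {H : Type*} [AddCommGroup H] [Module ℝ H] {ι : Type*}
    (cl : (ι →₀ ℝ) →ₗ[ℝ] H)
    (PsefH : Set H)
    (Hr : ι → Type*) [∀ i, AddCommGroup (Hr i)] [∀ i, Module ℝ (Hr i)]
    (res : ∀ i, H →ₗ[ℝ] Hr i)
    (Psef : ∀ i, Set (Hr i))
    (α : H)
    (E₁ E₂ : ι →₀ ℝ) (hE₁ : ∀ j, 0 ≤ E₁ j) (hE₂ : ∀ j, 0 ≤ E₂ j)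
    (hdisj : Disjoint E₁.support E₂.support)
    (hclass : cl E₁ - cl E₂ = α)
    (hNak : E₁ ≠ 0 → ∃ i ∈ E₁.support, res i (cl E₁) ∉ Psef i)
    (heffres : ∀ i ∈ E₁.support, res i (cl E₂) ∈ Psef i)
    (hnefres : ∀ i, res i α ∈ Psef i)
    (haddres : ∀ i, ∀ x ∈ Psef i, ∀ y ∈ Psef i, x + y ∈ Psef i)
    (heffH : ∀ E : ι →₀ ℝ, (∀ j, 0 ≤ E j) → cl E ∈ PsefH)
    (hnefH : α ∈ PsefH)
    (hpointed : ∀ x ∈ PsefH, -x ∈ PsefH → x = 0)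
    (hinj : ∀ E : ι →₀ ℝ, (∀ j, 0 ≤ E j) → cl E = 0 → E = 0) :
    E₁ = 0 ∧ E₂ = 0 := by
  have hE1 : E₁ = 0 := by
    by_contra h
    obtain ⟨i, _, hi⟩ := hNak h
    apply hi
    have : cl E₁ = cl E₂ + α := by rw [← hclass]; abel
    rw [this, map_add]
    exact haddres i _ (heffres i ‹i ∈ E₁.support›) _ (hnefres i)
  subst hE1
  refine ⟨rfl, ?_⟩
  simp only [map_zero, zero_sub] at hclass
  have hα0 : α = 0 := hpointed α hnefH (by rw [← hclass, neg_neg]; exact heffH E₂ hE₂)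
  exact hinj E₂ hE₂ (by rw [← neg_eq_zero, hclass, hα0])
end
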